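/- arXiv:2603.01320 — 2 statements merged into one kernel-verified Lean document; each statement's English description precedes it below -/
import Mathlib

section
/- Let A be a real Banach algebra with unit and let X, Y ∈ A. Then there exist constants C ≥ 0 and δ > 0 such that for all real ε with |ε| ≤ δ, ‖exp(εY) * exp(εX) − exp(ε(X + Y) + (ε²/2)·⁅Y, X⁆ + (ε³/12)·(⁅Y, ⁅Y, X⁆⁆ + ⁅X, ⁅X, Y⁆⁆))‖ ≤ C·ε⁴. (This is the third-order Baker–Campbell–Hausdorff expansion of Section 9.4.) -/
/-!
Let `T₃ w = 1 + w + w²/2 + w³/6`. Since `exp` is analytic, `exp w - T₃ w = O(‖w‖⁴)`, so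
each of the three exponentials may be replaced by its cubic Taylor polynomial at the cost of
`O(ε⁴)`, because all three arguments are `O(ε)`. What remains is a polynomial identity in `ε`:
`T₃(εY) T₃(εX)` and `T₃(ε(X + Y) + ε²/2 ⁅Y, X⁆ + ε³/12 (⁅Y, ⁅Y, X⁆⁆ + ⁅X, ⁅X, Y⁆⁆))` have the same
coefficients up to `ε³`, and their differences from the common cubic part are `ε⁴` times
continuous functions of `ε`.
-/

open NormedSpace Asymptotics Filter Topology

section

variable {A : Type*} [NormedRing A] [NormedAlgebra ℝ A]

noncomputable def expTaylor3 (w : A) : A :=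
  1 + w + (2⁻¹ : ℝ) • w ^ 2 + (6⁻¹ : ℝ) • w ^ 3

theorem expSeries_partialSum_four (w : A) :
    (expSeries ℝ A).partialSum 4 w = expTaylor3 w := by
  simp [FormalMultilinearSeries.partialSum, expSeries_apply_eq, Finset.sum_range_succ,
    expTaylor3, Nat.factorial]

theorem isBigO_exp_sub_expTaylor3 [CompleteSpace A] :
    (fun w : A => exp w - expTaylor3 w) =O[𝓝 0] fun w => ‖w‖ ^ 4 := by
  simpa [expSeries_partialSum_four] using
    (hasFPowerSeriesAt_exp_zero_of_radius_pos (𝕂 := ℝ) (𝔸 := A)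
      (by simp [expSeries_radius_eq_top])).isBigO_sub_partialSum_pow 4

theorem Asymptotics.IsBigO.exp_sub_expTaylor3 [CompleteSpace A] {w : ℝ → A}
    (hw : w =O[𝓝 0] id) :
    (fun ε => exp (w ε) - expTaylor3 (w ε)) =O[𝓝 0] fun ε => ε ^ 4 :=
  (isBigO_exp_sub_expTaylor3.comp_tendsto (hw.trans_tendsto tendsto_id)).trans
    (hw.norm_left.pow 4)

theorem Continuous.isBigO_pow_smul {F : ℝ → A} (hF : Continuous F) (n : ℕ) :
    (fun ε : ℝ => ε ^ n • F ε) =O[𝓝 0] fun ε => ε ^ n := by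
  simpa using (isBigO_refl (fun ε : ℝ => ε ^ n) (𝓝 0)).smul ((hF.tendsto 0).isBigO_one ℝ)

theorem Continuous.isBigO_smul_id {F : ℝ → A} (hF : Continuous F) :
    (fun ε : ℝ => ε • F ε) =O[𝓝 0] id :=
  (hF.isBigO_pow_smul 1).congr (fun ε => by simp) (fun ε => by simp)

theorem isBigO_expTaylor3_smul_mul_expTaylor3_smul_sub (X Y : A) :
    (fun ε : ℝ => expTaylor3 (ε • Y) * expTaylor3 (ε • X) -
      (expTaylor3 (ε • (X + Y)) + (ε ^ 2 / 2) • ⁅Y, X⁆ +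
        (ε ^ 3 / 12) • (⁅Y, ⁅Y, X⁆⁆ + ⁅X, ⁅X, Y⁆⁆) +
        (ε ^ 3 / 4) • ((X + Y) * ⁅Y, X⁆ + ⁅Y, X⁆ * (X + Y)))) =O[𝓝 0] fun ε => ε ^ 4 := by
  -- the terms `ε^(i+j) / (i! j!) • Y^i X^j` of the product with `i + j ≥ 4`
  have hF : Continuous fun ε : ℝ => (6⁻¹ : ℝ) • (Y * X ^ 3 + Y ^ 3 * X) +
      (4⁻¹ : ℝ) • (Y ^ 2 * X ^ 2) + (ε / 12) • (Y ^ 2 * X ^ 3 + Y ^ 3 * X ^ 2) +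
      (ε ^ 2 / 36) • (Y ^ 3 * X ^ 3) := by
    fun_prop
  refine (hF.isBigO_pow_smul 4).congr_left fun ε => ?_
  simp only [expTaylor3, Ring.lie_def, pow_succ, pow_zero, one_mul, mul_one, mul_add, add_mul,
    sub_mul, mul_sub, smul_mul_assoc, mul_smul_comm, smul_smul, smul_add, smul_sub, mul_assoc]
  module

theorem isBigO_expTaylor3_add_sub (P Q R : A) :
    (fun ε : ℝ => expTaylor3 (ε • P + (ε ^ 2 / 2) • Q + (ε ^ 3 / 12) • R) -
      (expTaylor3 (ε • P) + (ε ^ 2 / 2) • Q + (ε ^ 3 / 12) • R +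
        (ε ^ 3 / 4) • (P * Q + Q * P))) =O[𝓝 0] fun ε => ε ^ 4 := by
  set V : ℝ → A := fun ε => (2⁻¹ : ℝ) • Q + (ε / 12) • R with hV
  set W : ℝ → A := fun ε => P + ε • V ε with hW
  -- The argument is `ε • W ε`; the `ε⁴` terms come from `V²` in `W² = P² + ε (P V + V P) + ε² V²`
  -- and from `W³ - P³ = ε (V W² + P V W + P² V)`.
  have hF : Continuous fun ε => (24⁻¹ : ℝ) • (P * R + R * P) + (2⁻¹ : ℝ) • V ε ^ 2 +
      (6⁻¹ : ℝ) • (V ε * W ε ^ 2 + P * V ε * W ε + P ^ 2 * V ε) := by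
    fun_prop
  refine (hF.isBigO_pow_smul 4).congr_left fun ε => ?_
  simp only [hW, hV, expTaylor3, pow_succ, pow_zero, one_mul, mul_add, add_mul, smul_mul_assoc,
    mul_smul_comm, smul_smul, smul_add, mul_assoc]
  module

theorem isBigO_exp_smul_mul_exp_smul_sub_exp_bch [CompleteSpace A] (X Y : A) :
    (fun ε : ℝ => exp (ε • Y) * exp (ε • X) -
      exp (ε • (X + Y) + (ε ^ 2 / 2) • ⁅Y, X⁆ + (ε ^ 3 / 12) • (⁅Y, ⁅Y, X⁆⁆ + ⁅X, ⁅X, Y⁆⁆)))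
      =O[𝓝 0] fun ε => ε ^ 4 := by
  set Q := ⁅Y, X⁆
  set R := ⁅Y, ⁅Y, X⁆⁆ + ⁅X, ⁅X, Y⁆⁆
  have hexp : Continuous (exp : A → A) :=
    continuous_iff_continuousAt.2 fun w => (exp_analytic (𝕂 := ℝ) w).continuousAt
  have hZ : (fun ε : ℝ => ε • (X + Y) + (ε ^ 2 / 2) • Q + (ε ^ 3 / 12) • R) =O[𝓝 0] id :=
    ((by fun_prop : Continuous fun ε : ℝ => X + Y + (ε / 2) • Q + (ε ^ 2 / 12) • R)
      |>.isBigO_smul_id).congr_left fun ε => by module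
  have hY : (fun ε : ℝ => (exp (ε • Y) - expTaylor3 (ε • Y)) * exp (ε • X))
      =O[𝓝 0] fun ε => ε ^ 4 := by
    simpa using (continuous_const (y := Y)).isBigO_smul_id.exp_sub_expTaylor3.mul
      (((hexp.comp (continuous_id.smul continuous_const)).tendsto 0).isBigO_one ℝ)
  have hX : (fun ε : ℝ => expTaylor3 (ε • Y) * (exp (ε • X) - expTaylor3 (ε • X)))
      =O[𝓝 0] fun ε => ε ^ 4 := by
    have hT : Continuous fun ε : ℝ => expTaylor3 (ε • Y) := by unfold expTaylor3; fun_prop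
    simpa using ((hT.tendsto 0).isBigO_one ℝ).mul
      (continuous_const (y := X)).isBigO_smul_id.exp_sub_expTaylor3
  refine ((((hY.add hX).add (isBigO_expTaylor3_smul_mul_expTaylor3_smul_sub X Y)).sub
    (isBigO_expTaylor3_add_sub (X + Y) Q R)).sub hZ.exp_sub_expTaylor3).congr_left fun ε => ?_
  simp only [mul_sub, sub_mul]
  abel

end

theorem Asymptotics.IsBigO.exists_bound_of_abs_le {E F : Type*} [Norm E]
    [SeminormedAddCommGroup F] {f : ℝ → E} {g : ℝ → F} (h : f =O[𝓝 0] g) :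
    ∃ C δ : ℝ, 0 ≤ C ∧ 0 < δ ∧ ∀ ε : ℝ, |ε| ≤ δ → ‖f ε‖ ≤ C * ‖g ε‖ := by
  obtain ⟨C, hC, hfg⟩ := h.exists_nonneg
  obtain ⟨δ, hδ, hball⟩ := Metric.nhds_basis_closedBall.eventually_iff.mp hfg.bound
  exact ⟨C, δ, hC, hδ, fun ε hε => hball (by simpa using hε)⟩

/-- Third-order Baker–Campbell–Hausdorff expansion (Section 9.4). -/
theorem bch_third_order (A : Type*) [NormedRing A] [NormedAlgebra ℝ A]
    [CompleteSpace A] (X Y : A) :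
    ∃ (C δ : ℝ), 0 ≤ C ∧ 0 < δ ∧ ∀ ε : ℝ, |ε| ≤ δ →
      ‖exp (ε • Y) * exp (ε • X) -
        exp (ε • (X + Y) + (ε ^ 2 / 2) • ⁅Y, X⁆ +
          (ε ^ 3 / 12) • (⁅Y, ⁅Y, X⁆⁆ + ⁅X, ⁅X, Y⁆⁆))‖ ≤ C * ε ^ 4 := by
  obtain ⟨C, δ, hC, hδ, hbound⟩ :=
    (isBigO_exp_smul_mul_exp_smul_sub_exp_bch X Y).exists_bound_of_abs_le
  refine ⟨C, δ, hC, hδ, fun ε hε => (hbound ε hε).trans_eq ?_⟩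
  rw [norm_pow, Real.norm_eq_abs, Even.pow_abs ⟨2, rfl⟩]
end

section
/- Let A be a real Banach algebra with unit and let X, Y ∈ A. Then the normalized order-asymmetry converges to the norm of the commutator: (1/ε²)·‖exp(εY) * exp(εX) − exp(εX) * exp(εY)‖ → ‖⁅Y, X⁆‖ as ε → 0 (ε ≠ 0). In particular, for sufficiently small exposures the order asymmetry scales quadratically in the exposure amplitude ε, with coefficient ‖⁅Y, X⁆‖. (This is the paper's experimentally testable quadratic-scaling prediction of Sections 9 and 11.) -/
open NormedSpace Filter Topology Asymptotics

/-!
Write `exp (ε • X) = 1 + ε • X + R ε` and `exp (ε • Y) = 1 + ε • Y + S ε`; that `R ε` and `S ε`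
are `o(ε)` is just differentiability of `ε ↦ exp (ε • Z)` at `0`. The constant `1` drops out of
the bracket, so
`⁅exp (ε • Y), exp (ε • X)⁆ = ε² • ⁅Y, X⁆ + ⁅ε • Y, R ε⁆ - ⁅ε • X, S ε⁆ + ⁅S ε, R ε⁆`, and every
remaining bracket pairs an `O(ε)` term with an `o(ε)` term, hence is `o(ε²)`. Dividing by `ε²`
and taking norms gives the limit.
-/

theorem Asymptotics.IsBigO.lie_isLittleO {α 𝕜 A : Type*} [NormedField 𝕜] [NormedRing A]
    {l : Filter α} {u v : α → A} {g₁ g₂ : α → 𝕜} (hu : u =O[l] g₁) (hv : v =o[l] g₂) :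
    (fun x => ⁅u x, v x⁆) =o[l] fun x => g₁ x * g₂ x := by
  simp only [Ring.lie_def]
  refine (hu.mul_isLittleO hv).sub ?_
  simpa only [mul_comm (g₂ _)] using hv.mul_isBigO hu

theorem tendsto_inv_smul_of_isLittleO_sub_smul {α 𝕜 E : Type*} [NormedField 𝕜]
    [NormedAddCommGroup E] [NormedSpace 𝕜 E] {l : Filter α} {F : α → E} {g : α → 𝕜} {c : E}
    (h : (fun x => F x - g x • c) =o[l] g) (hg : ∀ᶠ x in l, g x ≠ 0) :
    Tendsto (fun x => (g x)⁻¹ • F x) l (𝓝 c) := by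
  have hlim := h.tendsto_inv_smul_nhds_zero.add_const c
  rw [zero_add] at hlim
  refine hlim.congr' ?_
  filter_upwards [hg] with x hx
  rw [smul_sub, inv_smul_smul₀ hx, sub_add_cancel]

section Commutator

variable {𝕜 A : Type*} [NontriviallyNormedField 𝕜] [NormedRing A] [NormedAlgebra 𝕜 A]

theorem isLittleO_lie_sub_sq_smul_lie {f g : 𝕜 → A} {a b : A}
    (hf : HasDerivAt f a 0) (hg : HasDerivAt g b 0) (hf0 : f 0 = 1) (hg0 : g 0 = 1) :
    (fun t => ⁅f t, g t⁆ - (t ^ 2) • ⁅a, b⁆) =o[𝓝 0] fun t => t ^ 2 := by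
  set R := fun t => f t - 1 - t • a
  set S := fun t => g t - 1 - t • b
  have hR : R =o[𝓝 0] fun t => t := by
    simpa only [zero_add, hf0] using hasDerivAt_iff_isLittleO_nhds_zero.mp hf
  have hS : S =o[𝓝 0] fun t => t := by
    simpa only [zero_add, hg0] using hasDerivAt_iff_isLittleO_nhds_zero.mp hg
  have hlin (c : A) : (fun t : 𝕜 => t • c) =O[𝓝 0] fun t => t :=
    isBigO_of_le' _ (c := ‖c‖) fun t => by rw [norm_smul, mul_comm]
  have hexpand (t : 𝕜) :
      ⁅f t, g t⁆ - (t ^ 2) • ⁅a, b⁆ = ⁅t • a, S t⁆ - ⁅t • b, R t⁆ + ⁅R t, S t⁆ := by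
    simp only [R, S, Ring.lie_def, smul_mul_assoc, mul_smul_comm, smul_smul, mul_sub, sub_mul,
      smul_sub]
    noncomm_ring
  have hsum := (((hlin a).lie_isLittleO hS).sub ((hlin b).lie_isLittleO hR)).add
    (hR.isBigO.lie_isLittleO hS)
  simpa only [hexpand, ← sq] using hsum

end Commutator

/-- The normalized order-asymmetry converges to the norm of the commutator
as ε → 0 (ε ≠ 0): the quadratic-scaling prediction of Sections 9 and 11. -/
theorem order_asymmetry_quadratic_scaling (A : Type*) [NormedRing A]
    [NormedAlgebra ℝ A] [CompleteSpace A] (X Y : A) :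
    Tendsto
      (fun ε : ℝ =>
        (1 / ε ^ 2) * ‖exp (ε • Y) * exp (ε • X) - exp (ε • X) * exp (ε • Y)‖)
      (𝓝[≠] (0 : ℝ)) (𝓝 ‖⁅Y, X⁆‖) := by
  have hderiv (Z : A) : HasDerivAt (fun ε : ℝ => exp (ε • Z)) Z 0 := by
    simpa using hasDerivAt_exp_smul_const (𝕂 := ℝ) Z 0
  have hasymp := isLittleO_lie_sub_sq_smul_lie (hderiv Y) (hderiv X) (by simp) (by simp)
  have hlim := tendsto_inv_smul_of_isLittleO_sub_smul (hasymp.mono nhdsWithin_le_nhds)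
    (eventually_mem_nhdsWithin.mono fun ε hε => pow_ne_zero 2 hε)
  refine hlim.norm.congr fun ε => ?_
  rw [norm_smul, norm_inv, norm_pow, Real.norm_eq_abs, sq_abs, one_div, Ring.lie_def]
end
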